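/- arXiv:2410.11585 — 2 statements merged into one kernel-verified Lean document; each statement's English description precedes it below -/
import Mathlib

section
/- Let H be a real inner product space, Q a symmetric bilinear form on H, and c a real number. Let V_1, …, V_N be elements of H such that for every v ∈ H with ⟨v, V_k⟩ = 0 for all k = 1, …, N one has Q(v, v) ≥ c·⟨v, v⟩. Let G be a finite-dimensional real inner product space with orthonormal basis θ_1, …, θ_δ, let S be a finite-dimensional real vector space, and let Φ : S × G → H be a bilinear map. Assume that for every nonzero T ∈ S one has Σ_{i=1}^{δ} Q(Φ(T, θ_i), Φ(T, θ_i)) < c · Σ_{i=1}^{δ} ⟨Φ(T, θ_i), Φ(T, θ_i)⟩. Then dim S ≤ δ · N. -/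
open scoped InnerProductSpace

/-- Abstract counting principle underlying Lemma 2.2(i):
if `Q v v ≥ c ⟪v,v⟫` whenever `v` is orthogonal to `V 1, …, V N`, and for every
nonzero `T ∈ S` the trace `∑ i, Q (Φ T θᵢ) (Φ T θᵢ)` is strictly less than
`c` times `∑ i, ⟪Φ T θᵢ, Φ T θᵢ⟫`, then `dim S ≤ δ * N`. -/
theorem index_counting_strict
    {H : Type*} [NormedAddCommGroup H] [InnerProductSpace ℝ H]
    {G : Type*} [NormedAddCommGroup G] [InnerProductSpace ℝ G] [FiniteDimensional ℝ G]
    {S : Type*} [AddCommGroup S] [Module ℝ S] [FiniteDimensional ℝ S]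
    (Q : LinearMap.BilinForm ℝ H) (hQsymm : Q.IsSymm) (c : ℝ)
    {N : ℕ} (V : Fin N → H)
    (hV : ∀ v : H, (∀ k : Fin N, ⟪v, V k⟫_ℝ = 0) → c * ⟪v, v⟫_ℝ ≤ Q v v)
    {δ : ℕ} (θ : OrthonormalBasis (Fin δ) ℝ G)
    (Φ : S →ₗ[ℝ] G →ₗ[ℝ] H)
    (hΦ : ∀ T : S, T ≠ 0 →
      ∑ i : Fin δ, Q (Φ T (θ i)) (Φ T (θ i))
        < c * ∑ i : Fin δ, ⟪Φ T (θ i), Φ T (θ i)⟫_ℝ) :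
    Module.finrank ℝ S ≤ δ * N := by
  classical
  let L : S →ₗ[ℝ] (Fin δ × Fin N → ℝ) :=
    { toFun := fun T p => ⟪Φ T (θ p.1), V p.2⟫_ℝ
      map_add' := by intro x y; funext p; simp [inner_add_left]
      map_smul' := by intro r x; funext p; simp [real_inner_smul_left] }
  have hinj : Function.Injective L := by
    rw [← LinearMap.ker_eq_bot, LinearMap.ker_eq_bot']
    intro T hT
    by_contra hT0
    have hk : ∀ i : Fin δ, ∀ k : Fin N, ⟪Φ T (θ i), V k⟫_ℝ = 0 := by
      intro i k
      have := congrFun hT (i, k)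
      simpa [L] using this
    have hsum : c * ∑ i : Fin δ, ⟪Φ T (θ i), Φ T (θ i)⟫_ℝ
        ≤ ∑ i : Fin δ, Q (Φ T (θ i)) (Φ T (θ i)) := by
      rw [Finset.mul_sum]
      exact Finset.sum_le_sum fun i _ => hV _ (hk i)
    exact absurd (hΦ T hT0) (not_lt.mpr hsum)
  calc Module.finrank ℝ S ≤ Module.finrank ℝ (Fin δ × Fin N → ℝ) :=
        LinearMap.finrank_le_finrank_of_injective hinj
    _ = δ * N := by simp [Module.finrank_pi]
end

section
/- Let H be a real inner product space, Q a symmetric bilinear form on H, and K a linear subspace of H. Let V_1, …, V_N be elements of H such that: (a) for every v ∈ H with ⟨v, V_k⟩ = 0 for all k = 1, …, N one has Q(v, v) ≥ 0, and (b) if moreover Q(v, v) = 0 for such a v, then v ∈ K. Let G be a finite-dimensional real inner product space with orthonormal basis θ_1, …, θ_δ, let S be a finite-dimensional real vector space, and let Φ : S × G → H be a bilinear map. Assume that for every nonzero T ∈ S one has Σ_{i=1}^{δ} Q(Φ(T, θ_i), Φ(T, θ_i)) ≤ 0. Define S_0 = {T ∈ S : Φ(T, θ_i) ∈ K for all i =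 1, …, δ}. Then S_0 is a linear subspace of S and dim S ≤ δ · N + dim S_0. -/
open scoped InnerProductSpace

/-- Abstract counting principle underlying Lemma 2.2(ii):
if `Q` is nonnegative on the orthogonal complement of `V 1, …, V N`, vanishing of
`Q v v` there forces `v ∈ K`, and for every nonzero `T ∈ S` the trace
`∑ i, Q (Φ T θᵢ) (Φ T θᵢ)` is nonpositive, then the set
`S₀ = {T | ∀ i, Φ T θᵢ ∈ K}` is a linear subspace of `S` and
`dim S ≤ δ * N + dim S₀`. -/
theorem index_counting_nonpos
    {H : Type*} [NormedAddCommGroup H] [InnerProductSpace ℝ H]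
    {G : Type*} [NormedAddCommGroup G] [InnerProductSpace ℝ G] [FiniteDimensional ℝ G]
    {S : Type*} [AddCommGroup S] [Module ℝ S] [FiniteDimensional ℝ S]
    (Q : LinearMap.BilinForm ℝ H) (hQsymm : Q.IsSymm) (K : Submodule ℝ H)
    {N : ℕ} (V : Fin N → H)
    (hV₁ : ∀ v : H, (∀ k : Fin N, ⟪v, V k⟫_ℝ = 0) → 0 ≤ Q v v)
    (hV₂ : ∀ v : H, (∀ k : Fin N, ⟪v, V k⟫_ℝ = 0) → Q v v = 0 → v ∈ K)
    {δ : ℕ} (θ : OrthonormalBasis (Fin δ) ℝ G)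
    (Φ : S →ₗ[ℝ] G →ₗ[ℝ] H)
    (hΦ : ∀ T : S, T ≠ 0 →
      ∑ i : Fin δ, Q (Φ T (θ i)) (Φ T (θ i)) ≤ 0) :
    ∃ S₀ : Submodule ℝ S,
      (S₀ : Set S) = {T : S | ∀ i : Fin δ, Φ T (θ i) ∈ K} ∧
      Module.finrank ℝ S ≤ δ * N + Module.finrank ℝ S₀ := by
  classical
  -- S₀ as a submodule
  set S₀ : Submodule ℝ S :=
    { carrier := {T : S | ∀ i : Fin δ, Φ T (θ i) ∈ K}
      add_mem' := by
        intro a b ha hb i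
        simpa using K.add_mem (ha i) (hb i)
      zero_mem' := by
        intro i; simpa using K.zero_mem
      smul_mem' := by
        intro c a ha i
        simpa using K.smul_mem c (ha i) } with hS₀
  refine ⟨S₀, rfl, ?_⟩
  -- the test map
  let L : S →ₗ[ℝ] (Fin δ × Fin N → ℝ) :=
    { toFun := fun T p => ⟪V p.2, Φ T (θ p.1)⟫_ℝ
      map_add' := by intro a b; funext p; simp [inner_add_right]
      map_smul' := by intro c a; funext p; simp [inner_smul_right] }
  have hker : LinearMap.ker L ≤ S₀ := by
    intro T hT
    have horth : ∀ i : Fin δ, ∀ k : Fin N, ⟪Φ T (θ i), V k⟫_ℝ = 0 := by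
      intro i k
      have := congrFun (LinearMap.mem_ker.mp hT) (i, k)
      simpa [L, real_inner_comm] using this
    by_cases hT0 : T = 0
    · intro i; simp [hT0]
    · have hnonneg : ∀ i : Fin δ, 0 ≤ Q (Φ T (θ i)) (Φ T (θ i)) :=
        fun i => hV₁ _ (horth i)
    -- sum is both ≥ 0 and ≤ 0
      have hsum0 : ∑ i : Fin δ, Q (Φ T (θ i)) (Φ T (θ i)) = 0 :=
        le_antisymm (hΦ T hT0) (Finset.sum_nonneg fun i _ => hnonneg i)
      have heach : ∀ i : Fin δ, Q (Φ T (θ i)) (Φ T (θ i)) = 0 := by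
        intro i
        have := (Finset.sum_eq_zero_iff_of_nonneg
          (fun i _ => hnonneg i)).mp hsum0 i (Finset.mem_univ i)
        exact this
      intro i
      exact hV₂ _ (horth i) (heach i)
  have hrank := LinearMap.finrank_range_add_finrank_ker L
  have hrange : Module.finrank ℝ (LinearMap.range L) ≤ δ * N := by
    calc Module.finrank ℝ (LinearMap.range L)
        ≤ Module.finrank ℝ (Fin δ × Fin N → ℝ) :=
          Submodule.finrank_le _
      _ = δ * N := by
          rw [Module.finrank_fintype_fun_eq_card]
          simp [Fintype.card_prod]
  have hkerle : Module.finrank ℝ (LinearMap.ker L) ≤ Module.finrank ℝ S₀ :=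
    Submodule.finrank_mono hker
  omega
end
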